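/- arXiv:2101.03586 — 7 statements merged into one kernel-verified Lean document; each statement's English description precedes it below -/
import Mathlib

section
/- Let η₁, ..., ηₙ (n ≥ 2) be vectors in a real inner product space with ⟨ηᵢ, ηⱼ⟩ = κ for all i ≠ j, where κ > 0, and suppose ‖η₁‖² = κ and ‖ηⱼ‖² ≠ κ for 2 ≤ j ≤ n. Then η₁ does not lie in the span of η₂, ..., ηₙ; in particular the span of η₁, ..., ηₙ has dimension at least n (i.e. the ηᵢ are linearly independent). -/
open RealInnerProductSpace

/-- Under the hypotheses of the previous statement, η₁ is not in the span of
η₂, ..., ηₙ, and in fact η₁, ..., ηₙ are linearly independent. -/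
theorem stmt2 {E : Type*} [NormedAddCommGroup E] [InnerProductSpace ℝ E]
    {n : ℕ} (hn : 2 ≤ n) (η : Fin n → E) (κ : ℝ) (hκ : 0 < κ)
    (hinner : ∀ i j, i ≠ j → ⟪η i, η j⟫ = κ)
    (i₀ : Fin n) (h1 : ‖η i₀‖ ^ 2 = κ)
    (hrest : ∀ j, j ≠ i₀ → ‖η j‖ ^ 2 ≠ κ) :
    η i₀ ∉ Submodule.span ℝ (η '' {j | j ≠ i₀}) ∧ LinearIndependent ℝ η := by
  have hind : LinearIndependent ℝ η := by
    rw [Fintype.linearIndependent_iff]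
    intro g hg
    have key : ∀ j : Fin n, g j * ‖η j‖ ^ 2 + κ * ((∑ i, g i) - g j) = 0 := by
      intro j
      have h0 : ⟪η j, ∑ i, g i • η i⟫ = 0 := by rw [hg, inner_zero_right]
      rw [inner_sum] at h0
      simp only [real_inner_smul_right] at h0
      rw [← Finset.add_sum_erase _ _ (Finset.mem_univ j)] at h0
      have hsum : ∑ i ∈ Finset.univ.erase j, g i * ⟪η j, η i⟫
          = ∑ i ∈ Finset.univ.erase j, g i * κ := by
        refine Finset.sum_congr rfl fun i hi => ?_
        rw [hinner j i (Finset.ne_of_mem_erase hi).symm]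
      rw [hsum, ← Finset.sum_mul, Finset.sum_erase_eq_sub (Finset.mem_univ j),
        real_inner_self_eq_norm_sq] at h0
      rw [← h0]
      ring_nf
    have hS : (∑ i, g i) = 0 := by
      have := key i₀
      rw [h1] at this
      have : κ * (∑ i, g i) = 0 := by linarith
      exact (mul_eq_zero.mp this).resolve_left (ne_of_gt hκ)
    have hz : ∀ j, j ≠ i₀ → g j = 0 := by
      intro j hj
      have := key j
      rw [hS] at this
      have h2 : g j * (‖η j‖ ^ 2 - κ) = 0 := by ring_nf; ring_nf at this; linarith
      rcases mul_eq_zero.mp h2 with h | h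
      · exact h
      · exact absurd (by linarith : ‖η j‖ ^ 2 = κ) (hrest j hj)
    intro i
    by_cases hi : i = i₀
    · subst hi
      have : (∑ j, g j) = g i := by
        rw [← Finset.add_sum_erase _ _ (Finset.mem_univ i)]
        rw [Finset.sum_eq_zero fun j hj => hz j (Finset.ne_of_mem_erase hj)]
        ring
      rw [← this, hS]
    · exact hz i hi
  refine ⟨?_, hind⟩
  exact hind.notMem_span_image (by simp)
end

section
/- Let η₁, ..., ηₙ be vectors in a real inner product space with ⟨ηᵢ, ηⱼ⟩ = κ for all i ≠ j (κ ≠ 0), with ‖ηᵢ‖² ≠ κ for all i, and suppose η₁, ..., η_{n-1} are linearly independent and ηₙ = Σ_{i=1}^{n-1} ρᵢ ηᵢ. Then ρⱼ = -(‖ηₙ‖² - κ)/(‖ηⱼ‖² - κ) for each 1 ≤ j ≤ n-1. -/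
open RealInnerProductSpace

/-- If η₁, ..., ηₙ have pairwise inner products κ ≠ 0, ‖ηᵢ‖² ≠ κ for all i,
η₁, ..., η_{n-1} are linearly independent and ηₙ = Σ ρᵢ ηᵢ, then
ρⱼ = -(‖ηₙ‖² - κ)/(‖ηⱼ‖² - κ). -/
theorem stmt3 {E : Type*} [NormedAddCommGroup E] [InnerProductSpace ℝ E]
    {n : ℕ} (η : Fin (n + 1) → E) (κ : ℝ) (hκ : κ ≠ 0)
    (hinner : ∀ i j, i ≠ j → ⟪η i, η j⟫ = κ)
    (hnorm : ∀ i, ‖η i‖ ^ 2 ≠ κ)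
    (hli : LinearIndependent ℝ (fun i : Fin n => η i.castSucc))
    (ρ : Fin n → ℝ)
    (hdep : η (Fin.last n) = ∑ i : Fin n, ρ i • η i.castSucc) :
    ∀ j : Fin n, ρ j =
      -(‖η (Fin.last n)‖ ^ 2 - κ) / (‖η j.castSucc‖ ^ 2 - κ) := by
  intro j
  have hne : ∀ i : Fin n, i.castSucc ≠ Fin.last n :=
    fun i => (Fin.castSucc_lt_last i).ne
  have h1 : ‖η (Fin.last n)‖ ^ 2 = κ * ∑ i : Fin n, ρ i := by
    rw [← real_inner_self_eq_norm_sq]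
    nth_rewrite 2 [hdep]
    rw [inner_sum, Finset.mul_sum]
    refine Finset.sum_congr rfl fun i _ => ?_
    rw [real_inner_smul_right, hinner _ _ (hne i).symm, mul_comm]
  have h2 : ∑ i : Fin n, ρ i * ⟪η j.castSucc, η i.castSucc⟫ = κ := by
    rw [← hinner j.castSucc (Fin.last n) (hne j), hdep, inner_sum]
    simp_rw [real_inner_smul_right]
  have key : ∑ i : Fin n, ρ i * (⟪η j.castSucc, η i.castSucc⟫ - κ)
      = ρ j * (‖η j.castSucc‖ ^ 2 - κ) := by
    rw [Finset.sum_eq_single j]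
    · rw [real_inner_self_eq_norm_sq]
    · intro i _ hij
      rw [hinner _ _ (fun h => hij (Fin.castSucc_injective n h).symm), sub_self, mul_zero]
    · simp
  have expand : ∑ i : Fin n, ρ i * (⟪η j.castSucc, η i.castSucc⟫ - κ)
      = (∑ i : Fin n, ρ i * ⟪η j.castSucc, η i.castSucc⟫) - κ * ∑ i : Fin n, ρ i := by
    rw [Finset.mul_sum, ← Finset.sum_sub_distrib]
    refine Finset.sum_congr rfl fun i _ => ?_
    ring
  have hmain : κ - ‖η (Fin.last n)‖ ^ 2 = ρ j * (‖η j.castSucc‖ ^ 2 - κ) := by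
    rw [← key, expand, h2, h1]
  have hden : ‖η j.castSucc‖ ^ 2 - κ ≠ 0 := sub_ne_zero.mpr (hnorm _)
  field_simp
  linarith [hmain]
end

section
/- Let η₁, ..., ηₙ be vectors in a real inner product space with ⟨ηᵢ, ηⱼ⟩ = κ for i ≠ j (κ ≠ 0) and ‖ηᵢ‖² ≠ κ for all i, such that ηₙ lies in the span of η₁, ..., η_{n-1}. Then Σ_{i=1}^{n} ηᵢ/(‖ηᵢ‖² - κ) = 0. -/
/-!
Write `ηₙ = ∑ ρⱼ ηⱼ`. Pairing this with `ηₙ` gives `‖ηₙ‖² = κ ∑ ρᵢ`, and pairing it with `ηⱼ` gives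
`κ = κ ∑ ρᵢ + ρⱼ (‖ηⱼ‖² - κ)`. Hence `ρⱼ (‖ηⱼ‖² - κ) = κ - ‖ηₙ‖²` for every `j`, so
`∑_{j<n} ηⱼ / (‖ηⱼ‖² - κ) = ηₙ / (κ - ‖ηₙ‖²)`, which cancels the last summand.
-/

open RealInnerProductSpace

namespace EquiangularFamily

variable {E ι : Type*} [NormedAddCommGroup E] [InnerProductSpace ℝ E] [Fintype ι]
  {v : ι → E} {w : E} {κ : ℝ} {ρ : ι → ℝ}

theorem coeff_mul_norm_sq_sub_eq (hv : Pairwise fun i j => ⟪v i, v j⟫ = κ)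
    (hw : ∀ i, ⟪v i, w⟫ = κ) (hρ : ∑ i, ρ i • v i = w) (j : ι) :
    ρ j * (‖v j‖ ^ 2 - κ) = κ - ‖w‖ ^ 2 := by
  classical
  have hnorm_w : ‖w‖ ^ 2 = κ * ∑ i, ρ i := by
    calc ‖w‖ ^ 2 = ⟪∑ i, ρ i • v i, w⟫ := by rw [hρ, real_inner_self_eq_norm_sq]
      _ = κ * ∑ i, ρ i := by
        simp only [sum_inner, real_inner_smul_left, hw, Finset.mul_sum, mul_comm]
  have hinner_vj : ∀ i, ⟪v j, v i⟫ = κ + if i = j then ‖v j‖ ^ 2 - κ else 0 := by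
    intro i
    by_cases hij : i = j
    · simp [hij]
    · simp [hij, hv (Ne.symm hij)]
  have hκ : κ = κ * ∑ i, ρ i + ρ j * (‖v j‖ ^ 2 - κ) := by
    calc κ = ⟪v j, w⟫ := (hw j).symm
      _ = ∑ i, ρ i * ⟪v j, v i⟫ := by
        simp only [← hρ, inner_sum, real_inner_smul_right]
      _ = κ * ∑ i, ρ i + ρ j * (‖v j‖ ^ 2 - κ) := by
        simp only [hinner_vj, mul_add, Finset.sum_add_distrib, mul_ite, mul_zero,
          Finset.sum_ite_eq', Finset.mem_univ, if_true, Finset.mul_sum, mul_comm]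
  linarith

theorem sum_inv_smul_add_inv_smul_eq_zero (hv : Pairwise fun i j => ⟪v i, v j⟫ = κ)
    (hw : ∀ i, ⟪v i, w⟫ = κ) (hρ : ∑ i, ρ i • v i = w) (hwκ : ‖w‖ ^ 2 ≠ κ) :
    ∑ i, (‖v i‖ ^ 2 - κ)⁻¹ • v i + (‖w‖ ^ 2 - κ)⁻¹ • w = 0 := by
  have hc : κ - ‖w‖ ^ 2 ≠ 0 := sub_ne_zero.mpr hwκ.symm
  have hinv : ∀ i, (‖v i‖ ^ 2 - κ)⁻¹ = (κ - ‖w‖ ^ 2)⁻¹ * ρ i := fun i =>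
    inv_eq_of_mul_eq_one_left <| by
      rw [mul_assoc, coeff_mul_norm_sq_sub_eq hv hw hρ, inv_mul_cancel₀ hc]
  simp only [hinv, mul_smul, ← Finset.smul_sum, hρ]
  rw [← neg_sub κ, inv_neg, neg_smul, add_neg_cancel]

end EquiangularFamily

theorem stmt4_general {E : Type*} [NormedAddCommGroup E] [InnerProductSpace ℝ E]
    {n : ℕ} (η : Fin (n + 1) → E) (κ : ℝ)
    (hinner : ∀ i j, i ≠ j → ⟪η i, η j⟫ = κ)
    (hnorm : ∀ i, ‖η i‖ ^ 2 ≠ κ)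
    (hdep : η (Fin.last n) ∈
      Submodule.span ℝ (Set.range fun i : Fin n => η i.castSucc)) :
    ∑ i : Fin (n + 1), (‖η i‖ ^ 2 - κ)⁻¹ • η i = 0 := by
  obtain ⟨ρ, hρ⟩ := (Submodule.mem_span_range_iff_exists_fun ℝ).mp hdep
  rw [Fin.sum_univ_castSucc]
  exact EquiangularFamily.sum_inv_smul_add_inv_smul_eq_zero
    (fun i j hij => hinner _ _ (Fin.castSucc_injective n |>.ne hij))
    (fun i => hinner _ _ (Fin.castSucc_lt_last i).ne) hρ (hnorm _)

/-- If η₁, ..., ηₙ have pairwise inner products κ ≠ 0, ‖ηᵢ‖² ≠ κ for all i,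
and ηₙ lies in the span of η₁, ..., η_{n-1}, then Σ ηᵢ/(‖ηᵢ‖² - κ) = 0. -/
theorem stmt4 {E : Type*} [NormedAddCommGroup E] [InnerProductSpace ℝ E]
    {n : ℕ} (η : Fin (n + 1) → E) (κ : ℝ) (hκ : κ ≠ 0)
    (hinner : ∀ i j, i ≠ j → ⟪η i, η j⟫ = κ)
    (hnorm : ∀ i, ‖η i‖ ^ 2 ≠ κ)
    (hdep : η (Fin.last n) ∈
      Submodule.span ℝ (Set.range fun i : Fin n => η i.castSucc)) :
    ∑ i : Fin (n + 1), (‖η i‖ ^ 2 - κ)⁻¹ • η i = 0 :=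
  stmt4_general η κ hinner hnorm hdep
end

section
/- Let η₁, ..., ηₙ be vectors in a real inner product space with ⟨ηᵢ, ηⱼ⟩ = κ for i ≠ j (κ ≠ 0), ‖ηᵢ‖² ≠ κ for all i, and Σ_{i=1}^n ηᵢ/(‖ηᵢ‖² - κ) = 0. Then Σ_{i=1}^n 1/(‖ηᵢ‖² - κ) = -1/κ. -/
open RealInnerProductSpace

/-! Pairing the vanishing sum with a fixed `η j` gives, since `⟪η j, η i⟫ = κ + δᵢⱼ (‖η j‖² - κ)`,
the scalar identity `1 + κ Σᵢ (‖η i‖² - κ)⁻¹ = 0`. -/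

section

variable {E ι : Type*} [NormedAddCommGroup E] [InnerProductSpace ℝ E] [DecidableEq ι]

lemma real_inner_eq_add_ite_of_pairwise {η : ι → E} {κ : ℝ}
    (hinner : ∀ i j, i ≠ j → ⟪η i, η j⟫ = κ) (i j : ι) :
    ⟪η j, η i⟫ = κ + if i = j then ‖η j‖ ^ 2 - κ else 0 := by
  split_ifs with h
  · rw [h, real_inner_self_eq_norm_sq]
    ring
  · rw [hinner j i (Ne.symm h), add_zero]

lemma one_add_mul_sum_inv_eq_zero [Fintype ι] {η : ι → E} {κ : ℝ}
    (hinner : ∀ i j, i ≠ j → ⟪η i, η j⟫ = κ) (hnorm : ∀ i, ‖η i‖ ^ 2 ≠ κ)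
    (hsum : ∑ i, (‖η i‖ ^ 2 - κ)⁻¹ • η i = 0) (j : ι) :
    1 + κ * ∑ i, (‖η i‖ ^ 2 - κ)⁻¹ = 0 := by
  have hpair : ∑ i, (‖η i‖ ^ 2 - κ)⁻¹ * ⟪η j, η i⟫ = 0 := by
    simpa only [inner_sum, real_inner_smul_right, inner_zero_right] using
      congrArg (fun v => ⟪η j, v⟫) hsum
  have hj : ‖η j‖ ^ 2 - κ ≠ 0 := sub_ne_zero.mpr (hnorm j)
  simp_rw [real_inner_eq_add_ite_of_pairwise hinner, mul_add, mul_ite, mul_zero,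
    Finset.sum_add_distrib, Finset.sum_ite_eq', Finset.mem_univ, if_true,
    inv_mul_cancel₀ hj, ← Finset.sum_mul] at hpair
  linarith

end

/-- If η₁, ..., ηₙ have pairwise inner products κ ≠ 0, ‖ηᵢ‖² ≠ κ for all i,
and Σ ηᵢ/(‖ηᵢ‖² - κ) = 0, then Σ 1/(‖ηᵢ‖² - κ) = -1/κ. -/
theorem stmt5 {E : Type*} [NormedAddCommGroup E] [InnerProductSpace ℝ E]
    {n : ℕ} (hn : 0 < n) (η : Fin n → E) (κ : ℝ) (hκ : κ ≠ 0)
    (hinner : ∀ i j, i ≠ j → ⟪η i, η j⟫ = κ)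
    (hnorm : ∀ i, ‖η i‖ ^ 2 ≠ κ)
    (hsum : ∑ i, (‖η i‖ ^ 2 - κ)⁻¹ • η i = 0) :
    ∑ i, (‖η i‖ ^ 2 - κ)⁻¹ = -1 / κ := by
  have h := one_add_mul_sum_inv_eq_zero hinner hnorm hsum ⟨0, hn⟩
  rw [eq_div_iff hκ]
  linarith
end

section
/- Let η₁, ..., ηₙ be vectors in a real inner product space with ⟨ηᵢ, ηⱼ⟩ = κ for i ≠ j (κ ≠ 0), ‖ηᵢ‖² ≠ κ for all i, and Σ_{i=1}^n ηᵢ/(‖ηᵢ‖² - κ) = 0. Then for each i, ηᵢ = Σ_{j≠i} (-κ/(‖ηⱼ‖² - κ)) (ηᵢ - ηⱼ). -/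
/-!
Write `c j = (‖η j‖² - κ)⁻¹`. Pairing `∑ j, c j • η j = 0` with `η i` and using
`⟪η i, η j⟫ = κ + δᵢⱼ (‖η i‖² - κ)` gives the scalar identity `κ ∑ j, c j = -1`.
The `j = i` summand of the right-hand side vanishes, so the sum may run over all `j`,
and it then equals `(-κ ∑ j, c j) • η i + κ • ∑ j, c j • η j = η i`.
-/

open RealInnerProductSpace Finset

lemma sum_erase_smul_sub_eq {ι R M : Type*} [Fintype ι] [DecidableEq ι] [Ring R]
    [AddCommGroup M] [Module R M] (a : ι → R) (v : ι → M) (i : ι) :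
    ∑ j ∈ univ.erase i, a j • (v i - v j) = (∑ j, a j) • v i - ∑ j, a j • v j := by
  rw [sum_erase _ (by simp)]
  simp only [smul_sub, sum_sub_distrib, sum_smul]

section

variable {ι E : Type*} [Fintype ι] [NormedAddCommGroup E] [InnerProductSpace ℝ E]
  {η : ι → E} {κ : ℝ}

lemma inner_sum_smul_of_inner_eq_of_ne (hinner : ∀ i j, i ≠ j → ⟪η i, η j⟫ = κ)
    (c : ι → ℝ) (i : ι) :
    ⟪η i, ∑ j, c j • η j⟫ = κ * ∑ j, c j + c i * (‖η i‖ ^ 2 - κ) := by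
  classical
  have hη : ∀ j, ⟪η i, η j⟫ = κ + if i = j then ‖η i‖ ^ 2 - κ else 0 := by
    intro j
    by_cases hij : i = j
    · subst hij
      simp
    · simp [hinner i j hij, hij]
  simp only [inner_sum, real_inner_smul_right, hη, mul_add, sum_add_distrib, mul_ite,
    mul_zero, sum_ite_eq, mem_univ, if_true, ← sum_mul]
  ring

lemma mul_sum_inv_norm_sq_sub_eq_neg_one (hinner : ∀ i j, i ≠ j → ⟪η i, η j⟫ = κ)
    (hnorm : ∀ i, ‖η i‖ ^ 2 ≠ κ) (hsum : ∑ i, (‖η i‖ ^ 2 - κ)⁻¹ • η i = 0) (i : ι) :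
    κ * ∑ j, (‖η j‖ ^ 2 - κ)⁻¹ = -1 := by
  have h := inner_sum_smul_of_inner_eq_of_ne hinner (fun j => (‖η j‖ ^ 2 - κ)⁻¹) i
  rw [hsum, inner_zero_right, inv_mul_cancel₀ (sub_ne_zero.mpr (hnorm i))] at h
  linarith

end

theorem stmt6_general {E : Type*} [NormedAddCommGroup E] [InnerProductSpace ℝ E]
    {n : ℕ} (η : Fin n → E) (κ : ℝ)
    (hinner : ∀ i j, i ≠ j → ⟪η i, η j⟫ = κ)
    (hnorm : ∀ i, ‖η i‖ ^ 2 ≠ κ)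
    (hsum : ∑ i, (‖η i‖ ^ 2 - κ)⁻¹ • η i = 0) :
    ∀ i, η i = ∑ j ∈ Finset.univ.erase i,
      (-κ / (‖η j‖ ^ 2 - κ)) • (η i - η j) := by
  intro i
  have hscalar := mul_sum_inv_norm_sq_sub_eq_neg_one hinner hnorm hsum i
  have hcoeffs : ∑ j, -κ / (‖η j‖ ^ 2 - κ) = 1 := by
    simp only [div_eq_mul_inv]
    rw [← mul_sum, neg_mul, hscalar, neg_neg]
  have hvec : ∑ j, (-κ / (‖η j‖ ^ 2 - κ)) • η j = 0 := by
    simp only [div_eq_mul_inv, mul_smul, ← smul_sum, hsum, smul_zero]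
  rw [sum_erase_smul_sub_eq, hcoeffs, hvec, one_smul, sub_zero]

/-- Under the same hypotheses, ηᵢ = Σ_{j ≠ i} (-κ/(‖ηⱼ‖² - κ)) (ηᵢ - ηⱼ). -/
theorem stmt6 {E : Type*} [NormedAddCommGroup E] [InnerProductSpace ℝ E]
    {n : ℕ} (η : Fin n → E) (κ : ℝ) (hκ : κ ≠ 0)
    (hinner : ∀ i j, i ≠ j → ⟪η i, η j⟫ = κ)
    (hnorm : ∀ i, ‖η i‖ ^ 2 ≠ κ)
    (hsum : ∑ i, (‖η i‖ ^ 2 - κ)⁻¹ • η i = 0) :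
    ∀ i, η i = ∑ j ∈ Finset.univ.erase i,
      (-κ / (‖η j‖ ^ 2 - κ)) • (η i - η j) :=
  stmt6_general η κ hinner hnorm hsum
end

section
/- Let η₁, ..., ηₙ (n ≥ 2) be pairwise distinct vectors in a real inner product space with ⟨ηᵢ, ηⱼ⟩ = κ for all i ≠ j, where κ < 0. Then ‖ηᵢ‖² ≠ κ trivially for all i, and the vectors η₁, ..., ηₙ span a subspace of dimension at least n - 1. -/
/-!
Pairing a relation `∑ cᵢ ηᵢ = 0` with `η_j` gives `c_j (‖η_j‖² - κ) + κ ∑ cᵢ = 0`. As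
`‖η_j‖² ≥ 0 > κ`, a relation with `∑ cᵢ = 0` is trivial, so the coefficient sum embeds the
space of relations into `ℝ`; by rank–nullity the span has dimension at least `n - 1`.
-/

open RealInnerProductSpace

theorem LinearMap.finrank_le_finrank_range_add_one {K V W : Type*} [Field K]
    [AddCommGroup V] [Module K V] [AddCommGroup W] [Module K W] [FiniteDimensional K V]
    (f : V →ₗ[K] W) (φ : V →ₗ[K] K) (h : ∀ v ∈ ker f, φ v = 0 → v = 0) :
    Module.finrank K V ≤ Module.finrank K (range f) + 1 := by
  have hφ : Function.Injective (φ ∘ₗ (ker f).subtype) := by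
    rw [← ker_eq_bot, ker_eq_bot']
    rintro ⟨v, hv⟩ hφv
    exact Subtype.ext (h v hv hφv)
  have hker : Module.finrank K (ker f) ≤ 1 := by
    simpa using finrank_le_finrank_of_injective hφ
  have := finrank_range_add_finrank_ker f
  omega

section EquiangularFamily

variable {E : Type*} [NormedAddCommGroup E] [InnerProductSpace ℝ E]
  {ι : Type*} [Fintype ι] {η : ι → E} {κ : ℝ}

theorem inner_sum_smul_of_inner_eq (hinner : ∀ i j, i ≠ j → ⟪η i, η j⟫ = κ)
    (c : ι → ℝ) (j : ι) :
    ⟪∑ i, c i • η i, η j⟫ = c j * (‖η j‖ ^ 2 - κ) + κ * ∑ i, c i := by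
  classical
  have hoff : ∑ i ∈ Finset.univ.erase j, c i * ⟪η i, η j⟫ =
      κ * ∑ i ∈ Finset.univ.erase j, c i := by
    rw [Finset.mul_sum]
    refine Finset.sum_congr rfl fun i hi => ?_
    rw [hinner i j (Finset.ne_of_mem_erase hi), mul_comm]
  simp only [sum_inner, real_inner_smul_left]
  rw [← Finset.add_sum_erase _ _ (Finset.mem_univ j), hoff,
    ← Finset.add_sum_erase _ c (Finset.mem_univ j), real_inner_self_eq_norm_sq]
  ring

theorem eq_zero_of_sum_smul_eq_zero_of_sum_eq_zero
    (hinner : ∀ i j, i ≠ j → ⟪η i, η j⟫ = κ) (hnorm : ∀ i, ‖η i‖ ^ 2 ≠ κ)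
    {c : ι → ℝ} (hc : ∑ i, c i • η i = 0) (hsum : ∑ i, c i = 0) : c = 0 := by
  funext j
  have hj := inner_sum_smul_of_inner_eq hinner c j
  rw [hc, inner_zero_left, hsum, mul_zero, add_zero] at hj
  exact (mul_eq_zero.1 hj.symm).resolve_right (sub_ne_zero.2 (hnorm j))

theorem card_le_finrank_span_add_one_of_inner_eq
    (hinner : ∀ i j, i ≠ j → ⟪η i, η j⟫ = κ) (hnorm : ∀ i, ‖η i‖ ^ 2 ≠ κ) :
    Fintype.card ι ≤ Module.finrank ℝ (Submodule.span ℝ (Set.range η)) + 1 := by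
  rw [← Fintype.range_linearCombination, ← Module.finrank_fintype_fun_eq_card (η := ι) ℝ]
  refine LinearMap.finrank_le_finrank_range_add_one _
    (Fintype.linearCombination ℝ fun _ => (1 : ℝ)) fun c hc hsum => ?_
  rw [LinearMap.mem_ker, Fintype.linearCombination_apply] at hc
  rw [Fintype.linearCombination_apply] at hsum
  simp only [smul_eq_mul, mul_one] at hsum
  exact eq_zero_of_sum_smul_eq_zero_of_sum_eq_zero hinner hnorm hc hsum

end EquiangularFamily

theorem stmt9_general {E : Type*} [NormedAddCommGroup E] [InnerProductSpace ℝ E]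
    {n : ℕ} (η : Fin n → E) (κ : ℝ) (hκ : κ < 0)
    (hinner : ∀ i j, i ≠ j → ⟪η i, η j⟫ = κ) :
    (∀ i, ‖η i‖ ^ 2 ≠ κ) ∧
    n - 1 ≤ Module.finrank ℝ (Submodule.span ℝ (Set.range η)) := by
  have hnorm : ∀ i, ‖η i‖ ^ 2 ≠ κ := fun i => (hκ.trans_le (sq_nonneg _)).ne'
  refine ⟨hnorm, ?_⟩
  have := card_le_finrank_span_add_one_of_inner_eq hinner hnorm
  rw [Fintype.card_fin] at this
  omega

/-- Pairwise distinct vectors η₁, ..., ηₙ (n ≥ 2) with pairwise inner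
products κ < 0 satisfy ‖ηᵢ‖² ≠ κ and span a subspace of dimension ≥ n - 1. -/
theorem stmt9 {E : Type*} [NormedAddCommGroup E] [InnerProductSpace ℝ E]
    {n : ℕ} (hn : 2 ≤ n) (η : Fin n → E) (κ : ℝ) (hκ : κ < 0)
    (hdist : Function.Injective η)
    (hinner : ∀ i j, i ≠ j → ⟪η i, η j⟫ = κ) :
    (∀ i, ‖η i‖ ^ 2 ≠ κ) ∧
    n - 1 ≤ Module.finrank ℝ (Submodule.span ℝ (Set.range η)) :=
  stmt9_general η κ hκ hinner
end

section
/- Let η₁, ..., ηₙ be pairwise distinct vectors in a real inner product space with ⟨ηᵢ, ηⱼ⟩ = κ for all i ≠ j, κ ≠ 0, and suppose at most one index i has ‖ηᵢ‖² = κ. If no index has ‖ηᵢ‖² = κ, then dim span{η₁,...,ηₙ} ≥ n - 1; if exactly one index has ‖ηᵢ‖² = κ, then dim span{η₁,...,ηₙ} = n. -/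
open RealInnerProductSpace Finset

section PairwiseInnerConst

variable {ι E : Type*} [Fintype ι] [NormedAddCommGroup E] [InnerProductSpace ℝ E]
  {η : ι → E} {κ : ℝ}

theorem inner_sum_smul_of_pairwise_inner_eq (hinner : Pairwise fun i j => ⟪η i, η j⟫ = κ)
    (c : ι → ℝ) (i : ι) :
    ⟪η i, ∑ j, c j • η j⟫ = (∑ j, c j) * κ + c i * (‖η i‖ ^ 2 - κ) := by
  classical
  calc ⟪η i, ∑ j, c j • η j⟫ = ∑ j, c j * ⟪η i, η j⟫ := by
        simp only [inner_sum, real_inner_smul_right]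
    _ = ∑ j, (c j * κ + if j = i then c j * (‖η i‖ ^ 2 - κ) else 0) := by
        refine sum_congr rfl fun j _ => ?_
        by_cases hji : j = i
        · subst hji
          rw [real_inner_self_eq_norm_sq, if_pos rfl]
          ring
        · rw [hinner (Ne.symm hji), if_neg hji, add_zero]
    _ = (∑ j, c j) * κ + c i * (‖η i‖ ^ 2 - κ) := by
        rw [sum_add_distrib, sum_ite_eq' univ i, if_pos (mem_univ i), sum_mul]

theorem coeff_eq_zero_of_sum_smul_eq_zero (hinner : Pairwise fun i j => ⟪η i, η j⟫ = κ)
    {c : ι → ℝ} (hc : ∑ j, c j • η j = 0) (hsum : ∑ j, c j = 0) {i : ι}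
    (hi : ‖η i‖ ^ 2 ≠ κ) : c i = 0 := by
  have h := inner_sum_smul_of_pairwise_inner_eq hinner c i
  rw [hc, inner_zero_right, hsum, zero_mul, zero_add] at h
  exact (mul_eq_zero.mp h.symm).resolve_right (sub_ne_zero.mpr hi)

/-- The coefficient sum is injective on the relations among the `η i`, so they form a space
of dimension at most one. -/
theorem finrank_ker_linearCombination_le_one (hinner : Pairwise fun i j => ⟪η i, η j⟫ = κ)
    (hnorm : ∀ i, ‖η i‖ ^ 2 ≠ κ) :
    Module.finrank ℝ (LinearMap.ker (Fintype.linearCombination ℝ η)) ≤ 1 := by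
  let coeffSum : (ι → ℝ) →ₗ[ℝ] ℝ := Fintype.linearCombination ℝ fun _ => 1
  have hinj :
      Function.Injective (coeffSum ∘ₗ (LinearMap.ker (Fintype.linearCombination ℝ η)).subtype) := by
    rw [← LinearMap.ker_eq_bot, LinearMap.ker_eq_bot']
    rintro ⟨c, hc⟩ hsum
    rw [LinearMap.mem_ker, Fintype.linearCombination_apply] at hc
    simp only [LinearMap.comp_apply, Submodule.coe_subtype, coeffSum,
      Fintype.linearCombination_apply, smul_eq_mul, mul_one] at hsum
    ext i
    exact coeff_eq_zero_of_sum_smul_eq_zero hinner hc hsum (hnorm i)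
  simpa using LinearMap.finrank_le_finrank_of_injective hinj

theorem card_sub_one_le_finrank_span (hinner : Pairwise fun i j => ⟪η i, η j⟫ = κ)
    (hnorm : ∀ i, ‖η i‖ ^ 2 ≠ κ) :
    Fintype.card ι - 1 ≤ Module.finrank ℝ (Submodule.span ℝ (Set.range η)) := by
  have hrank := LinearMap.finrank_range_add_finrank_ker (Fintype.linearCombination ℝ η)
  rw [Fintype.range_linearCombination, Module.finrank_fintype_fun_eq_card] at hrank
  have := finrank_ker_linearCombination_le_one hinner hnorm
  omega

theorem linearIndependent_of_norm_sq_eq (hinner : Pairwise fun i j => ⟪η i, η j⟫ = κ)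
    (hκ : κ ≠ 0) {i₀ : ι} (hi₀ : ‖η i₀‖ ^ 2 = κ) (hnorm : ∀ i, i ≠ i₀ → ‖η i‖ ^ 2 ≠ κ) :
    LinearIndependent ℝ η := by
  rw [Fintype.linearIndependent_iff]
  intro c hc
  have hsum : ∑ j, c j = 0 := by
    have h := inner_sum_smul_of_pairwise_inner_eq hinner c i₀
    rw [hc, inner_zero_right, hi₀, sub_self, mul_zero, add_zero] at h
    exact (mul_eq_zero.mp h.symm).resolve_right hκ
  have hrest : ∀ i, i ≠ i₀ → c i = 0 := fun i hi =>
    coeff_eq_zero_of_sum_smul_eq_zero hinner hc hsum (hnorm i hi)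
  have hc₀ : c i₀ = 0 := by
    rwa [← sum_eq_single i₀ (fun j _ hj => hrest j hj) (fun h => absurd (mem_univ i₀) h)]
  intro i
  by_cases hi : i = i₀
  · exact hi ▸ hc₀
  · exact hrest i hi

end PairwiseInnerConst

theorem stmt16_general {E : Type*} [NormedAddCommGroup E] [InnerProductSpace ℝ E]
    {n : ℕ} (η : Fin n → E) (κ : ℝ) (hκ : κ ≠ 0)
    (hinner : ∀ i j, i ≠ j → ⟪η i, η j⟫ = κ)
    (hone : ∀ i j, ‖η i‖ ^ 2 = κ → ‖η j‖ ^ 2 = κ → i = j) :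
    ((∀ i, ‖η i‖ ^ 2 ≠ κ) →
      n - 1 ≤ Module.finrank ℝ (Submodule.span ℝ (Set.range η))) ∧
    ((∃ i, ‖η i‖ ^ 2 = κ) →
      Module.finrank ℝ (Submodule.span ℝ (Set.range η)) = n) := by
  refine ⟨fun hnorm => ?_, fun ⟨i₀, hi₀⟩ => ?_⟩
  · simpa using card_sub_one_le_finrank_span hinner hnorm
  · have hli := linearIndependent_of_norm_sq_eq hinner hκ hi₀
      fun i hi h => hi (hone i i₀ h hi₀)
    rw [finrank_span_eq_card hli, Fintype.card_fin]

/-- For pairwise distinct η₁, ..., ηₙ with pairwise inner products κ ≠ 0 and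
at most one index with ‖ηᵢ‖² = κ: if no index has ‖ηᵢ‖² = κ then the span has
dimension ≥ n - 1; if exactly one index does, the span has dimension n. -/
theorem stmt16 {E : Type*} [NormedAddCommGroup E] [InnerProductSpace ℝ E]
    {n : ℕ} (η : Fin n → E) (κ : ℝ) (hκ : κ ≠ 0)
    (hdist : Function.Injective η)
    (hinner : ∀ i j, i ≠ j → ⟪η i, η j⟫ = κ)
    (hone : ∀ i j, ‖η i‖ ^ 2 = κ → ‖η j‖ ^ 2 = κ → i = j) :
    ((∀ i, ‖η i‖ ^ 2 ≠ κ) →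
      n - 1 ≤ Module.finrank ℝ (Submodule.span ℝ (Set.range η))) ∧
    ((∃ i, ‖η i‖ ^ 2 = κ) →
      Module.finrank ℝ (Submodule.span ℝ (Set.range η)) = n) :=
  stmt16_general η κ hκ hinner hone
end
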